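/- Let f: 𝒳 → ℝ be realized by a feed-forward neural network with finitely many layers, finitely many neurons, and ReLU activations, and let X have a bounded density with bounded support 𝒳 ⊂ ℝⁿ. Then the conditional expectation E[log|f(X)| given |f(X)| > 0] is finite (assuming P(|f(X)|>0) > 0). -/

import Mathlib

open MeasureTheory
open scoped ENNReal

open Set Matrix

lemma intInt_log_abs (R : ℝ) (hR : 0 ≤ R) :
    IntegrableOn (fun t => Real.log |t|) (Icc (-R) R) volume := by
  have A : IntervalIntegrable (fun t => Real.log |t|) volume 0 R := by
    rw [intervalIntegrable_iff_integrableOn_Ioc_of_le hR]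
    have hdom : IntegrableOn (fun t : ℝ => 2 * t ^ (-1/2 : ℝ) + |Real.log R|) (Ioc 0 R) volume := by
      apply Integrable.add
      · have h := intervalIntegral.intervalIntegrable_rpow' (a := 0) (b := R) (r := -1/2)
          (by norm_num)
        rw [intervalIntegrable_iff_integrableOn_Ioc_of_le hR] at h
        exact h.const_mul 2
      · exact integrableOn_const (by simp [hR])
    apply MeasureTheory.Integrable.mono hdom
    · exact (Real.measurable_log.comp measurable_abs).aestronglyMeasurable
    · filter_upwards [ae_restrict_mem measurableSet_Ioc] with t ht
      have ht0 : 0 < t := ht.1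
      have htR : t ≤ R := ht.2
      have hrp : (0:ℝ) < t ^ (-1/2 : ℝ) := Real.rpow_pos_of_pos ht0 _
      have key : |Real.log t| ≤ 2 * t ^ (-1/2 : ℝ) + |Real.log R| := by
        rcases le_or_gt t 1 with h1 | h1
        · have hlt : Real.log t ≤ 0 := Real.log_nonpos ht0.le h1
          have h2 : Real.log (t ^ (-1/2 : ℝ)) = (-1/2) * Real.log t := Real.log_rpow ht0 _
          have h3 : Real.log (t ^ (-1/2:ℝ)) ≤ t ^ (-1/2:ℝ) - 1 :=
            Real.log_le_sub_one_of_pos hrp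
          have : -Real.log t ≤ 2 * t ^ (-1/2 : ℝ) := by nlinarith
          calc |Real.log t| = -Real.log t := abs_of_nonpos hlt
          _ ≤ 2 * t ^ (-1/2:ℝ) := this
          _ ≤ _ := le_add_of_nonneg_right (abs_nonneg _)
        · have h4 : Real.log t ≤ |Real.log R| :=
            le_trans (Real.log_le_log ht0 htR) (le_abs_self _)
          have h5 : |Real.log t| = Real.log t := abs_of_nonneg (Real.log_nonneg h1.le)
          nlinarith
      have habs : |t| = t := abs_of_pos ht0
      rw [Real.norm_eq_abs, Real.norm_eq_abs, habs]
      exact key.trans (le_abs_self _)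
  have B : IntervalIntegrable (fun t => Real.log |t|) volume (-R) 0 := by
    have := ((IntervalIntegrable.iff_comp_neg enorm_ne_top).mp A.symm)
    simpa [abs_neg, neg_zero, neg_neg] using this
  have := B.trans A
  rwa [intervalIntegrable_iff_integrableOn_Icc_of_le (by linarith)] at this

lemma map_eval_box {n : ℕ} (R : ℝ) (j : Fin n) :
    ((volume : Measure (Fin n → ℝ)).restrict (Set.pi univ fun _ => Icc (-R) R)).map
      (Function.eval j)
    = ((∏ _i ∈ Finset.univ.erase j, ENNReal.ofReal (2*R)) • volume.restrict (Icc (-R) R)) := by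
  apply Measure.ext
  intro s hs
  rw [Measure.map_apply (measurable_pi_apply j) hs, Measure.restrict_apply
    (measurable_pi_apply j hs)]
  have hset : Function.eval j ⁻¹' s ∩ (Set.pi univ fun _ => Icc (-R) R)
      = Set.pi univ (fun i => if i = j then s ∩ Icc (-R) R else Icc (-R) R) := by
    ext y
    simp only [mem_inter_iff, mem_preimage, mem_pi, mem_univ, forall_true_left, Function.eval]
    constructor
    · rintro ⟨h1, h2⟩ i
      by_cases hij : i = j
      · subst hij; simp [h1, h2 i]
      · simp [hij, h2 i]
    · intro h
      have hj := h j
      simp only [if_pos rfl] at hj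
      refine ⟨hj.1, fun i => ?_⟩
      by_cases hij : i = j
      · subst hij; exact hj.2
      · simpa [hij] using h i
  rw [hset, volume_pi_pi]
  rw [← Finset.mul_prod_erase Finset.univ _ (Finset.mem_univ j)]
  simp only [if_pos rfl]
  have : ∀ i ∈ Finset.univ.erase j,
      volume (if i = j then s ∩ Icc (-R) R else Icc (-R) R) = ENNReal.ofReal (2*R) := by
    intro i hi
    rw [if_neg (Finset.ne_of_mem_erase hi), Real.volume_Icc]
    norm_num [two_mul]
  rw [Finset.prod_congr rfl this]
  simp only [Measure.smul_apply, Measure.restrict_apply hs, smul_eq_mul, if_true,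
    mul_comm, mul_left_comm, two_mul]

lemma det_updateRow_one {n : ℕ} (j : Fin n) (a : Fin n → ℝ) :
    ((1 : Matrix (Fin n) (Fin n) ℝ).updateRow j a).det = a j := by
  calc ((1 : Matrix (Fin n) (Fin n) ℝ).updateRow j a).det
      = ((1 : Matrix (Fin n) (Fin n) ℝ)ᵀ.updateRow j a).det := by rw [Matrix.transpose_one]
    _ = (((1 : Matrix (Fin n) (Fin n) ℝ).updateCol j a)ᵀ).det := by
        rw [Matrix.updateRow_transpose]
    _ = ((1 : Matrix (Fin n) (Fin n) ℝ).updateCol j a).det := Matrix.det_transpose _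
    _ = Matrix.cramer (1 : Matrix (Fin n) (Fin n) ℝ) a j := (Matrix.cramer_apply _ _ _).symm
    _ = a j := by rw [Matrix.cramer_one]; rfl

lemma integrableOn_log_affine {n : ℕ} (a : Fin n → ℝ) (c : ℝ) (K : Set (Fin n → ℝ))
    (hK : Bornology.IsBounded K) (hKm : MeasurableSet K) :
    IntegrableOn (fun x => Real.log |(∑ i, a i * x i) + c|)
      (K ∩ {x | (∑ i, a i * x i) + c ≠ 0}) volume := by
  by_cases ha : a = 0
  · subst ha
    simp only [Pi.zero_apply, zero_mul, Finset.sum_const_zero, zero_add]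
    by_cases hc : c = 0
    · simp [hc]
    · have : K ∩ {_x : Fin n → ℝ | c ≠ 0} = K := by
        ext x; simp [hc]
      rw [this]
      exact integrableOn_const hK.measure_lt_top.ne
  · obtain ⟨j, hj⟩ : ∃ j, a j ≠ 0 := by
      by_contra h
      push_neg at h
      exact ha (funext h)
    set M : Matrix (Fin n) (Fin n) ℝ := (1 : Matrix (Fin n) (Fin n) ℝ).updateRow j a with hM
    have hdet : M.det = a j := det_updateRow_one j a
    have hdetL : LinearMap.det (Matrix.toLin' M) = a j := by
      rw [LinearMap.det_toLin']; exact hdet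
    set v : Fin n → ℝ := fun i => if i = j then c else 0 with hv
    set S : (Fin n → ℝ) → (Fin n → ℝ) := fun x => Matrix.toLin' M x + v with hS
    have hScont : Continuous S := by
      exact ((Matrix.toLin' M).continuous_of_finiteDimensional).add continuous_const
    have hSmeas : Measurable S := hScont.measurable
    have hSj : ∀ x, S x j = (∑ i, a i * x i) + c := by
      intro x
      simp only [hS, Pi.add_apply, hv, if_pos rfl]
      congr 1
      rw [Matrix.toLin'_apply]
      simp [Matrix.mulVec, dotProduct, hM, Matrix.updateRow_self, mul_comm]
    -- pushforward of volume under S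
    have hmap : (volume : Measure (Fin n → ℝ)).map S
        = ENNReal.ofReal |(a j)⁻¹| • volume := by
      have h1 : S = (fun y => y + v) ∘ (Matrix.toLin' M) := rfl
      rw [h1, ← Measure.map_map (measurable_add_const v) (Matrix.toLin' M).continuous_of_finiteDimensional.measurable]
      rw [Real.map_linearMap_volume_pi_eq_smul_volume_pi (by rw [hdetL]; exact hj)]
      rw [Measure.map_smul, map_add_right_eq_self, hdetL]
    -- bounded image
    obtain ⟨R₀, hR₀⟩ := hK.subset_closedBall 0
    have hcpt : IsCompact (S '' Metric.closedBall 0 R₀) :=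
      (isCompact_closedBall 0 R₀).image hScont
    obtain ⟨R₁, hR₁⟩ := hcpt.isBounded.subset_closedBall 0
    set R := max R₁ 1 with hR
    have hR1 : (0:ℝ) ≤ R := le_trans zero_le_one (le_max_right _ _)
    set box : Set (Fin n → ℝ) := Set.pi univ fun _ => Icc (-R) R with hbox
    have hboxm : MeasurableSet box := MeasurableSet.univ_pi fun _ => measurableSet_Icc
    have himg : K ⊆ S ⁻¹' box := by
      intro x hx
      have : S x ∈ Metric.closedBall (0 : Fin n → ℝ) R₁ := hR₁ ⟨x, hR₀ hx, rfl⟩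
      have h2 : S x ∈ Metric.closedBall (0 : Fin n → ℝ) R :=
        Metric.closedBall_subset_closedBall (le_max_left _ _) this
      rw [closedBall_pi _ hR1] at h2
      simp only [hbox, mem_pi, mem_univ, forall_true_left] at h2 ⊢
      intro i _
      have := h2 i
      rwa [Real.closedBall_eq_Icc, Pi.zero_apply, zero_sub, zero_add] at this
    -- integrability of log |y j| on the box
    have hbase : Integrable (fun y : Fin n → ℝ => Real.log |y j|) (volume.restrict box) := by
      have h1 : Integrable (fun t : ℝ => Real.log |t|)
          (((volume : Measure (Fin n → ℝ)).restrict box).map (Function.eval j)) := by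
        rw [map_eval_box]
        refine Integrable.smul_measure (intInt_log_abs R hR1) ?_
        exact (ENNReal.prod_lt_top (fun _ _ => ENNReal.ofReal_lt_top)).ne
      have hsm : AEStronglyMeasurable (fun t : ℝ => Real.log |t|)
          (((volume : Measure (Fin n → ℝ)).restrict box).map (Function.eval j)) :=
        (Real.measurable_log.comp measurable_abs).aestronglyMeasurable
      have := (integrable_map_measure hsm (measurable_pi_apply j).aemeasurable).mp h1
      simpa [Function.comp_def] using this
    -- comparison of measures
    set K' := K ∩ {x | (∑ i, a i * x i) + c ≠ 0} with hK'
    have hle : ((volume : Measure (Fin n → ℝ)).restrict K').map S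
        ≤ ENNReal.ofReal |(a j)⁻¹| • (volume.restrict box) := by
      rw [Measure.le_iff]
      intro s hs
      rw [Measure.map_apply hSmeas hs, Measure.restrict_apply (hSmeas hs)]
      have hsub : s ∩ box ∈ {t : Set (Fin n → ℝ) | MeasurableSet t} := hs.inter hboxm
      calc volume (S ⁻¹' s ∩ K')
          ≤ volume (S ⁻¹' (s ∩ box)) := by
            apply measure_mono
            rintro x ⟨hx1, hx2⟩
            exact ⟨hx1, himg hx2.1⟩
        _ = ((volume : Measure (Fin n → ℝ)).map S) (s ∩ box) :=
            (Measure.map_apply hSmeas hsub).symm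
        _ = ENNReal.ofReal |(a j)⁻¹| * ((volume.restrict box) s) := by
            rw [hmap]
            simp [Measure.restrict_apply hs]
        _ = (ENNReal.ofReal |(a j)⁻¹| • (volume.restrict box)) s := rfl
    have h2 : Integrable (fun y : Fin n → ℝ => Real.log |y j|)
        (((volume : Measure (Fin n → ℝ)).restrict K').map S) := by
      apply Integrable.mono_measure _ hle
      exact hbase.smul_measure ENNReal.ofReal_ne_top
    have hsm2 : AEStronglyMeasurable (fun y : Fin n → ℝ => Real.log |y j|)
        (((volume : Measure (Fin n → ℝ)).restrict K').map S) :=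
      (Real.measurable_log.comp (measurable_abs.comp (measurable_pi_apply j))).aestronglyMeasurable
    have h3 := (integrable_map_measure hsm2 hSmeas.aemeasurable).mp h2
    have h4 : ((fun y : Fin n → ℝ => Real.log |y j|) ∘ S)
        = fun x => Real.log |(∑ i, a i * x i) + c| := by
      funext x
      simp only [Function.comp_apply, hSj x]
    rwa [h4] at h3

/-- Functions computed by feed-forward neural networks with finitely many layers, finitely
many neurons per layer, and ReLU activations. -/
inductive IsReLUNet : {n m : ℕ} → ((Fin n → ℝ) → (Fin m → ℝ)) → Prop where
  | affine {n m : ℕ} (A : Matrix (Fin m) (Fin n) ℝ) (b : Fin m → ℝ) :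
      IsReLUNet (fun x => A.mulVec x + b)
  | layer {n k m : ℕ} (A : Matrix (Fin k) (Fin n) ℝ) (b : Fin k → ℝ)
      {g : (Fin k → ℝ) → (Fin m → ℝ)} (hg : IsReLUNet g) :
      IsReLUNet (fun x => g (fun i => max ((A.mulVec x + b) i) 0))

lemma IsReLUNet.exists_pieces {n m : ℕ} {F : (Fin n → ℝ) → (Fin m → ℝ)} (hF : IsReLUNet F) :
    ∃ S : Set (Matrix (Fin m) (Fin n) ℝ × (Fin m → ℝ)), S.Finite ∧
      ∀ x, ∃ p ∈ S, F x = p.1.mulVec x + p.2 := by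
  induction hF with
  | affine A b => exact ⟨{(A, b)}, Set.finite_singleton _, fun x => ⟨(A, b), rfl, rfl⟩⟩
  | @layer n k m A b g hg ih =>
    classical
    obtain ⟨Sg, hSgfin, hSg⟩ := ih
    set D : (Fin k → Bool) → Matrix (Fin k) (Fin k) ℝ :=
      fun σ => Matrix.diagonal (fun i => if σ i then (1:ℝ) else 0) with hD
    refine ⟨(fun q => (q.2.1 * D q.1 * A, q.2.1.mulVec ((D q.1).mulVec b) + q.2.2)) ''
      (Set.univ ×ˢ Sg), (Set.finite_univ.prod hSgfin).image _, ?_⟩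
    intro x
    set y := fun i => max ((A.mulVec x + b) i) 0 with hy
    obtain ⟨p, hp, hpy⟩ := hSg y
    set σ := fun i => decide (0 ≤ (A.mulVec x + b) i) with hσ
    refine ⟨_, ⟨(σ, p), ⟨Set.mem_univ _, hp⟩, rfl⟩, ?_⟩
    have hyD : y = (D σ).mulVec (A.mulVec x + b) := by
      funext i
      rw [hy]
      simp only [hD, Matrix.mulVec_diagonal, hσ]
      simp only [decide_eq_true_eq]
      by_cases h : 0 ≤ (A.mulVec x + b) i
      · rw [if_pos h, one_mul]; exact max_eq_left h
      · rw [if_neg h, zero_mul]; exact max_eq_right (not_le.1 h).le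
    show g y = _
    rw [hpy, hyD]
    simp only [Matrix.mulVec_add, ← Matrix.mulVec_mulVec, add_assoc]

lemma IsReLUNet.continuous {n m : ℕ} {F : (Fin n → ℝ) → (Fin m → ℝ)} (hF : IsReLUNet F) :
    Continuous F := by
  induction hF with
  | @affine n m A b =>
    exact ((Matrix.mulVecLin A).continuous_of_finiteDimensional).add continuous_const
  | @layer n k m A b g hg ih =>
    refine ih.comp ?_
    refine continuous_pi fun i => Continuous.max ?_ continuous_const
    exact (continuous_apply i).comp
      (((Matrix.mulVecLin A).continuous_of_finiteDimensional).add continuous_const)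

/-- For a ReLU network `f` and an input `X` with bounded density and bounded support, the
conditional expectation `E[log|f(X)| ∣ |f(X)| > 0]` is finite. -/
theorem relu_net_log_integrable {n : ℕ} {Ω : Type*} [MeasurableSpace Ω]
    (μ : Measure Ω) [IsProbabilityMeasure μ]
    (X : Ω → Fin n → ℝ) (hX : Measurable X)
    (F : (Fin n → ℝ) → (Fin 1 → ℝ)) (hF : IsReLUNet F)
    (f : (Fin n → ℝ) → ℝ) (hf : ∀ x, f x = F x 0)
    (𝒳 : Set (Fin n → ℝ)) (hbdd : Bornology.IsBounded 𝒳) (hsupp : ∀ᵐ ω ∂μ, X ω ∈ 𝒳)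
    (P : ℝ≥0∞) (hP : P < ⊤) (hXd : μ.map X ≤ P • volume)
    (hpos : 0 < μ {ω | 0 < |f (X ω)|}) :
    Integrable (fun ω => Real.log |f (X ω)|) (μ.restrict {ω | 0 < |f (X ω)|}) := by
  classical
  have hfcont : Continuous f := by
    have hfe : f = (fun v : Fin 1 → ℝ => v 0) ∘ F := funext hf
    rw [hfe]
    exact (continuous_apply 0).comp hF.continuous
  have hfm : Measurable f := hfcont.measurable
  set B : Set (Fin n → ℝ) := {x | f x ≠ 0} with hB
  have hBm : MeasurableSet B := (hfm (measurableSet_singleton 0)).compl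
  set g : (Fin n → ℝ) → ℝ := fun x => Real.log |f x| with hg
  have hgm : Measurable g := Real.measurable_log.comp (measurable_abs.comp hfm)
  have hAeq : {ω | 0 < |f (X ω)|} = X ⁻¹' B := by
    ext ω; simp [hB, abs_pos]
  rw [hAeq]
  -- the key integrability over the pushforward measure
  obtain ⟨R₀, h𝒳K⟩ := hbdd.subset_closedBall 0
  set K : Set (Fin n → ℝ) := Metric.closedBall 0 R₀ with hK
  have hKm : MeasurableSet K := measurableSet_closedBall
  have hKbdd : Bornology.IsBounded K := Metric.isBounded_closedBall
  have hcore : IntegrableOn g (B ∩ K) volume := by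
    obtain ⟨S, hSfin, hS⟩ := hF.exists_pieces
    have hcover : B ∩ K ⊆ ⋃ p ∈ S,
        (B ∩ K ∩ {x | f x = (∑ i, p.1 0 i * x i) + p.2 0}) := by
      intro x hx
      obtain ⟨p, hp, hpx⟩ := hS x
      refine mem_biUnion hp ⟨hx, ?_⟩
      rw [mem_setOf_eq, hf x, hpx]
      simp [Matrix.mulVec, dotProduct]
    refine IntegrableOn.mono_set ?_ hcover
    rw [integrableOn_finite_biUnion hSfin]
    intro p hp
    set a : Fin n → ℝ := fun i => p.1 0 i with ha
    set c : ℝ := p.2 0 with hc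
    have hEcl : IsClosed {x : Fin n → ℝ | f x = (∑ i, a i * x i) + c} := by
      apply isClosed_eq hfcont
      exact (continuous_finset_sum _ fun i _ =>
        continuous_const.mul (continuous_apply i)).add continuous_const
    have hEm : MeasurableSet {x : Fin n → ℝ | f x = (∑ i, a i * x i) + c} :=
      hEcl.measurableSet
    have hIa := integrableOn_log_affine a c K hKbdd hKm
    have h1 : IntegrableOn (fun x => Real.log |(∑ i, a i * x i) + c|)
        (B ∩ K ∩ {x | f x = (∑ i, a i * x i) + c}) volume := by
      refine hIa.mono_set ?_
      rintro x ⟨⟨hxB, hxK⟩, hxE⟩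
      have hxe : f x = (∑ i, a i * x i) + c := hxE
      exact ⟨hxK, fun h0 => hxB (hxe.trans h0)⟩
    refine IntegrableOn.congr_fun h1 ?_ ((hBm.inter hKm).inter hEm)
    rintro x ⟨⟨_, _⟩, hxE⟩
    have hxe : f x = (∑ i, a i * x i) + c := hxE
    show Real.log |(∑ i, a i * x i) + c| = Real.log |f x|
    rw [hxe]
  -- transfer to μ via the pushforward
  have hnull : (μ.map X) Kᶜ = 0 := by
    rw [Measure.map_apply hX hKm.compl]
    have hae : ∀ᵐ ω ∂μ, X ω ∈ K := hsupp.mono fun ω h => h𝒳K h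
    exact ae_iff.mp hae
  have hInt2 : Integrable g ((μ.map X).restrict B) := by
    have heq : (μ.map X).restrict B = (μ.map X).restrict (B ∩ K) := by
      apply Measure.restrict_congr_set
      rw [MeasureTheory.ae_eq_set]
      constructor
      · refine measure_mono_null ?_ hnull
        rintro x ⟨hxB, hxBK⟩
        exact fun hxK => hxBK ⟨hxB, hxK⟩
      · refine measure_mono_null ?_ (measure_empty (μ := μ.map X))
        rintro x ⟨⟨_, _⟩, hxB⟩
        exact absurd ‹x ∈ B› hxB
    rw [heq]
    have hle2 : (μ.map X).restrict (B ∩ K) ≤ P • (volume.restrict (B ∩ K)) := by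
      have h3 : (μ.map X).restrict (B ∩ K) ≤ (P • volume).restrict (B ∩ K) :=
        Measure.restrict_mono (subset_refl _) hXd
      rwa [Measure.restrict_smul] at h3
    exact (hcore.smul_measure hP.ne).mono_measure hle2
  rw [Measure.restrict_map hX hBm] at hInt2
  have hfin := (integrable_map_measure hgm.aestronglyMeasurable hX.aemeasurable).mp hInt2
  simpa [Function.comp_def, hg] using hfin
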